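/- Let $K \subset \mathbb{R}^2$ be a compact convex body whose support function $h(\vartheta) = \sup_{y \in K} \langle (\cos\vartheta, \sin\vartheta), y \rangle$ is twice continuously differentiable with $h(\vartheta) + h''(\vartheta) > 0$ for all $\vartheta$. Fix $\vartheta_0 \in \mathbb{R}$ and let $i(\vartheta) = h(\vartheta) n_\vartheta - \big(\int_{\vartheta_0}^{\vartheta} h(\tau)\,d\tau - h'(\vartheta_0)\big) t_\vartheta$ be the left involute of $\partial K$ starting at $i(\vartheta_0)$. Let $y \in \partial K$. Then $\vartheta \mapsto \|i(\vartheta) - y\|$ is nondecreasing on $[\vartheta_0, \infty)$, and for every $\vartheta > \vartheta_0$ with $\langle n_\vartheta, y \rangle < h(\vartheta)$ (i.e. $n_\vartheta$ not in the normal cone of $K$ at $y$) one has $\frac{d}{d\vartheta}\|i(\vartheta) - y\|^2 > 0$. -/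

import Mathlib

/-!
Differentiating the involute gives `i'(ϑ) = g(ϑ) n_ϑ` with
`g(ϑ) = h'(ϑ) + ∫_{ϑ₀}^ϑ h - h'(ϑ₀)`, the length of string unwound from `∂K` between the
normals `n_{ϑ₀}` and `n_ϑ`. Since `g' = h + h'' > 0` and `g(ϑ₀) = 0`, `g > 0` on `(ϑ₀, ∞)`.
Moreover `⟪n_ϑ, i(ϑ) - y⟫ = h(ϑ) - ⟪n_ϑ, y⟫`, so
`(‖i(ϑ) - y‖²)' = 2 g(ϑ) (h(ϑ) - ⟪n_ϑ, y⟫)`, and the second factor is nonnegative for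
`y ∈ K` by definition of the support function, and positive off the normal cone.
-/

open Real MeasureTheory

noncomputable def vec2 (a b : ℝ) : EuclideanSpace ℝ (Fin 2) :=
  (WithLp.equiv 2 (Fin 2 → ℝ)).symm ![a, b]

/-- The outer normal direction `n_ϑ = (cos ϑ, sin ϑ)`. -/
noncomputable def nvec (θ : ℝ) : EuclideanSpace ℝ (Fin 2) := vec2 (Real.cos θ) (Real.sin θ)

/-- The tangent direction `t_ϑ = (-sin ϑ, cos ϑ)`. -/
noncomputable def tvec (θ : ℝ) : EuclideanSpace ℝ (Fin 2) := vec2 (-Real.sin θ) (Real.cos θ)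

lemma inner_vec2 (a b c d : ℝ) : (inner ℝ (vec2 a b) (vec2 c d) : ℝ) = a * c + b * d := by
  simp [vec2, PiLp.inner_apply, Fin.sum_univ_two]; ring

lemma vec2_neg (a b : ℝ) : vec2 (-a) (-b) = -vec2 a b := by
  ext j; fin_cases j <;> simp [vec2]

lemma HasDerivAt.vec2 {f g : ℝ → ℝ} {f' g' t : ℝ} (hf : HasDerivAt f f' t)
    (hg : HasDerivAt g g' t) : HasDerivAt (fun s => vec2 (f s) (g s)) (vec2 f' g') t := by
  have H : HasDerivAt (fun s => (![f s, g s] : Fin 2 → ℝ)) ![f', g'] t := by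
    rw [hasDerivAt_pi]; intro j; fin_cases j <;> simpa
  exact (EuclideanSpace.equiv (Fin 2) ℝ).symm.toContinuousLinearMap.hasFDerivAt.comp_hasDerivAt t H

lemma hasDerivAt_nvec (θ : ℝ) : HasDerivAt nvec (tvec θ) θ :=
  (hasDerivAt_cos θ).vec2 (hasDerivAt_sin θ)

lemma hasDerivAt_tvec (θ : ℝ) : HasDerivAt tvec (-nvec θ) θ := by
  rw [nvec, ← vec2_neg]
  exact (hasDerivAt_sin θ).neg.vec2 (hasDerivAt_cos θ)

lemma inner_nvec_self (θ : ℝ) : (inner ℝ (nvec θ) (nvec θ) : ℝ) = 1 := by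
  rw [nvec, inner_vec2, ← sq, ← sq, cos_sq_add_sin_sq]

lemma inner_nvec_tvec (θ : ℝ) : (inner ℝ (nvec θ) (tvec θ) : ℝ) = 0 := by
  rw [nvec, tvec, inner_vec2]; ring

lemma inner_nvec_smul_nvec_sub_smul_tvec (θ a b : ℝ) (y : EuclideanSpace ℝ (Fin 2)) :
    (inner ℝ (nvec θ) (a • nvec θ - b • tvec θ - y) : ℝ) = a - inner ℝ (nvec θ) y := by
  rw [inner_sub_right, inner_sub_right, real_inner_smul_right, real_inner_smul_right,
    inner_nvec_self, inner_nvec_tvec]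
  ring

section Involute

variable {h : ℝ → ℝ} {θ₀ : ℝ}

/-- The involute is `i(θ) = x(θ) - unwoundLength h θ₀ θ • t_θ`, where `x(θ) = h n_θ + h' t_θ` is
the boundary point with outer normal `n_θ`. -/
noncomputable def unwoundLength (h : ℝ → ℝ) (θ₀ θ : ℝ) : ℝ :=
  deriv h θ + ((∫ τ in θ₀..θ, h τ) - deriv h θ₀)

lemma unwoundLength_self : unwoundLength h θ₀ θ₀ = 0 := by
  simp [unwoundLength]

lemma hasDerivAt_integral_sub_const (hc : Continuous h) (c θ : ℝ) :
    HasDerivAt (fun θ => (∫ τ in θ₀..θ, h τ) - c) (h θ) θ :=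
  (intervalIntegral.integral_hasDerivAt_right (hc.intervalIntegrable θ₀ θ)
    (hc.stronglyMeasurableAtFilter _ _) hc.continuousAt).sub_const c

lemma hasDerivAt_unwoundLength (hsm : ContDiff ℝ 2 h) (θ : ℝ) :
    HasDerivAt (unwoundLength h θ₀) (deriv (deriv h) θ + h θ) θ :=
  (hsm.differentiable_deriv_two θ).hasDerivAt.add
    (hasDerivAt_integral_sub_const hsm.continuous _ θ)

lemma strictMono_unwoundLength (hsm : ContDiff ℝ 2 h)
    (hpos : ∀ θ, 0 < h θ + deriv (deriv h) θ) : StrictMono (unwoundLength h θ₀) :=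
  strictMono_of_hasDerivAt_pos (hasDerivAt_unwoundLength hsm) fun θ => by linarith [hpos θ]

lemma hasDerivAt_involute (hd : Differentiable ℝ h) (θ : ℝ) :
    HasDerivAt (fun θ => h θ • nvec θ - ((∫ τ in θ₀..θ, h τ) - deriv h θ₀) • tvec θ)
      (unwoundLength h θ₀ θ • nvec θ) θ := by
  refine (((hd θ).hasDerivAt.smul (hasDerivAt_nvec θ)).sub
    ((hasDerivAt_integral_sub_const hd.continuous (deriv h θ₀) θ).smul
      (hasDerivAt_tvec θ))).congr_deriv ?_
  rw [unwoundLength]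
  module

end Involute

lemma HasDerivAt.norm_sub_sq_of_smul {E : Type*} [NormedAddCommGroup E] [InnerProductSpace ℝ E]
    {c : ℝ → E} {g : ℝ} {v y : E} {t : ℝ} (hc : HasDerivAt c (g • v) t) :
    HasDerivAt (fun s => ‖c s - y‖ ^ 2) (2 * g * Inner.inner ℝ v (c t - y)) t := by
  convert (hc.sub_const y).norm_sq using 1
  rw [real_inner_smul_right, real_inner_comm]
  ring

theorem stmt_11_general (K : Set (EuclideanSpace ℝ (Fin 2)))
    (hcp : IsCompact K)
    (h : ℝ → ℝ)
    (hsupp : ∀ θ : ℝ, IsLUB ((fun y => (inner ℝ (nvec θ) y : ℝ)) '' K) (h θ))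
    (hsm : ContDiff ℝ 2 h) (hpos : ∀ θ, 0 < h θ + deriv (deriv h) θ)
    (θ₀ : ℝ) (i : ℝ → EuclideanSpace ℝ (Fin 2))
    (hi : ∀ θ, i θ = h θ • nvec θ - ((∫ τ in θ₀..θ, h τ) - deriv h θ₀) • tvec θ) :
    ∀ y ∈ frontier K,
      MonotoneOn (fun θ => ‖i θ - y‖) (Set.Ici θ₀) ∧
      (∀ θ, θ₀ < θ → (inner ℝ (nvec θ) y : ℝ) < h θ →
        0 < deriv (fun ϑ => ‖i ϑ - y‖ ^ 2) θ) := by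
  intro y hy
  set g := unwoundLength h θ₀
  have hg : StrictMono g := strictMono_unwoundLength hsm hpos
  have hsupp_y : ∀ θ, (inner ℝ (nvec θ) y : ℝ) ≤ h θ :=
    fun θ => (hsupp θ).1 ⟨y, hcp.isClosed.frontier_subset hy, rfl⟩
  have hderiv : ∀ θ, HasDerivAt (fun ϑ => ‖i ϑ - y‖ ^ 2)
      (2 * g θ * (h θ - inner ℝ (nvec θ) y)) θ := fun θ => by
    have hdi : HasDerivAt i (g θ • nvec θ) θ := by
      rw [funext hi]; exact hasDerivAt_involute (hsm.differentiable two_ne_zero) θ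
    simpa only [hi θ, inner_nvec_smul_nvec_sub_smul_tvec] using hdi.norm_sub_sq_of_smul (y := y)
  constructor
  · have hsq : MonotoneOn (fun θ => ‖i θ - y‖ ^ 2) (Set.Ici θ₀) := by
      refine monotoneOn_of_hasDerivWithinAt_nonneg (convex_Ici θ₀)
        (fun θ _ => (hderiv θ).continuousAt.continuousWithinAt)
        (fun θ _ => (hderiv θ).hasDerivWithinAt) fun θ hθ => ?_
      rw [interior_Ici] at hθ
      have hg_nonneg : 0 ≤ g θ := unwoundLength_self (h := h) ▸ hg.monotone hθ.le
      exact mul_nonneg (by positivity) (sub_nonneg.2 (hsupp_y θ))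
    intro p hp q hq hpq
    exact (pow_le_pow_iff_left₀ (norm_nonneg _) (norm_nonneg _) two_ne_zero).1 (hsq hp hq hpq)
  · intro θ hθ hlt
    have hg_pos : 0 < g θ := unwoundLength_self (h := h) ▸ hg hθ
    rw [(hderiv θ).deriv]
    exact mul_pos (by positivity) (sub_pos.2 hlt)

/-- For every `y ∈ ∂K`, the distance `ϑ ↦ ‖i(ϑ) - y‖` from `y` to the
left involute is nondecreasing on `[ϑ₀, ∞)`, and for every `ϑ > ϑ₀` with
`⟪n_ϑ, y⟫ < h(ϑ)` (i.e. `n_ϑ` not in the normal cone of `K` at `y`) the derivative of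
`‖i(ϑ) - y‖²` is strictly positive. -/
theorem stmt_11 (K : Set (EuclideanSpace ℝ (Fin 2)))
    (hne : K.Nonempty) (hcp : IsCompact K) (hcv : Convex ℝ K)
    (h : ℝ → ℝ)
    (hsupp : ∀ θ : ℝ, IsLUB ((fun y => (inner ℝ (nvec θ) y : ℝ)) '' K) (h θ))
    (hsm : ContDiff ℝ 2 h) (hpos : ∀ θ, 0 < h θ + deriv (deriv h) θ)
    (θ₀ : ℝ) (i : ℝ → EuclideanSpace ℝ (Fin 2))
    (hi : ∀ θ, i θ = h θ • nvec θ - ((∫ τ in θ₀..θ, h τ) - deriv h θ₀) • tvec θ) :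
    ∀ y ∈ frontier K,
      MonotoneOn (fun θ => ‖i θ - y‖) (Set.Ici θ₀) ∧
      (∀ θ, θ₀ < θ → (inner ℝ (nvec θ) y : ℝ) < h θ →
        0 < deriv (fun ϑ => ‖i ϑ - y‖ ^ 2) θ) :=
  stmt_11_general K hcp h hsupp hsm hpos θ₀ i hi
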